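/- arXiv:2304.09839 — 2 statements merged into one kernel-verified Lean document; each statement's English description precedes it below -/
import Mathlib

section
/- Let p be a real number with 0 < p ≤ 1/2, set ℓ = ⌊1/p⌋, and let Y be a binomial random variable with parameters ℓ and p (i.e., the number of successes in ℓ independent Bernoulli(p) trials). Then for every integer δ ≥ 1, P(Y ≥ δ) = Σ_{i=δ}^{ℓ} C(ℓ,i) p^i (1−p)^{ℓ−i} ≤ exp( −(1/2)(δ ln δ − δ + 1) ). -/
/-!
Bounding every binomial coefficient `C(ℓ, i)`, `i ≥ δ`, by `C(ℓ, δ) C(ℓ - δ, i - δ)` and summing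
the remaining binomial distribution to one gives `P(Y ≥ δ) ≤ C(ℓ, δ) p ^ δ ≤ (ℓ p) ^ δ / δ!`,
which is at most `1 / δ!` because `ℓ p ≤ 1`. The Stirling-type bound `δ! ≥ e (δ / e) ^ δ`
finishes the proof, even without the factor `1 / 2` in the exponent.
-/

open Finset Real

theorem Nat.choose_add_le_choose_mul_choose (n k j : ℕ) :
    n.choose (k + j) ≤ n.choose k * (n - k).choose j := by
  have h := Nat.choose_mul (n := n) (Nat.le_add_right k j)
  rw [Nat.add_sub_cancel_left] at h
  exact h ▸ Nat.le_mul_of_pos_right _ (Nat.choose_pos (Nat.le_add_right k j))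

theorem sum_Icc_choose_mul_pow_mul_pow_le {p : ℝ} (hp0 : 0 ≤ p) (hp1 : p ≤ 1) (n k : ℕ) :
    ∑ i ∈ Icc k n, (n.choose i : ℝ) * p ^ i * (1 - p) ^ (n - i) ≤ n.choose k * p ^ k := by
  rcases lt_or_ge n k with hnk | hkn
  · simp [Icc_eq_empty_of_lt hnk, Nat.choose_eq_zero_of_lt hnk]
  have hq : 0 ≤ 1 - p := sub_nonneg.2 hp1
  calc ∑ i ∈ Icc k n, (n.choose i : ℝ) * p ^ i * (1 - p) ^ (n - i)
      = ∑ j ∈ range (n - k + 1), (n.choose (k + j) : ℝ) * p ^ (k + j) * (1 - p) ^ (n - k - j) := by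
        rw [← Ico_add_one_right_eq_Icc, sum_Ico_eq_sum_range, Nat.sub_add_comm hkn]
        simp only [Nat.sub_sub]
    _ ≤ ∑ j ∈ range (n - k + 1),
          n.choose k * p ^ k * (p ^ j * (1 - p) ^ (n - k - j) * (n - k).choose j) := by
        refine sum_le_sum fun j _ => ?_
        have hchoose : (n.choose (k + j) : ℝ) ≤ n.choose k * (n - k).choose j := by
          exact_mod_cast Nat.choose_add_le_choose_mul_choose n k j
        calc (n.choose (k + j) : ℝ) * p ^ (k + j) * (1 - p) ^ (n - k - j)
            ≤ n.choose k * (n - k).choose j * p ^ (k + j) * (1 - p) ^ (n - k - j) := by gcongr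
          _ = _ := by ring
    _ = n.choose k * p ^ k := by
        rw [← mul_sum, ← add_pow, add_sub_cancel, one_pow, mul_one]

theorem mul_log_add_one_sub_log_le_one {x : ℝ} (hx : 0 < x) : x * (log (x + 1) - log x) ≤ 1 := by
  rw [← log_div (by positivity) hx.ne']
  calc x * log ((x + 1) / x) ≤ x * ((x + 1) / x - 1) :=
        mul_le_mul_of_nonneg_left (log_le_sub_one_of_pos (by positivity)) hx.le
    _ = 1 := by field_simp; ring

theorem exp_mul_log_sub_add_one_le_factorial {n : ℕ} (hn : 1 ≤ n) :
    exp (n * log n - n + 1) ≤ n.factorial := by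
  induction n, hn using Nat.le_induction with
  | base => simp
  | succ n hn ih =>
    have hx : (0 : ℝ) < n := by exact_mod_cast hn
    have hstep : ((n : ℝ) + 1) * log (n + 1) - (n + 1) + 1 ≤ log (n + 1) + (n * log n - n + 1) := by
      nlinarith [mul_log_add_one_sub_log_le_one hx]
    calc exp (((n + 1 : ℕ) : ℝ) * log ((n + 1 : ℕ) : ℝ) - ((n + 1 : ℕ) : ℝ) + 1)
        ≤ exp (log (n + 1) + (n * log n - n + 1)) := by push_cast; exact exp_le_exp.2 hstep
      _ = (n + 1) * exp (n * log n - n + 1) := by rw [exp_add, exp_log (by positivity)]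
      _ ≤ (n + 1) * n.factorial := by gcongr
      _ = (n + 1).factorial := by push_cast [Nat.factorial_succ]; ring

/-- For 0 < p <= 1/2 and l = floor(1/p), a Binomial(l,p) random
variable Y satisfies, for every integer delta >= 1,
P(Y >= delta) = sum_{i=delta}^{l} C(l,i) p^i (1-p)^(l-i)
             <= exp(-(1/2)(delta ln delta - delta + 1)). -/
theorem binomial_tail_bound
    (p : ℝ) (hp0 : 0 < p) (hp : p ≤ 1 / 2)
    (ℓ : ℕ) (hℓ : ℓ = ⌊1 / p⌋₊) (δ : ℕ) (hδ : 1 ≤ δ) :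
    ∑ i ∈ Finset.Icc δ ℓ, (ℓ.choose i : ℝ) * p ^ i * (1 - p) ^ (ℓ - i)
      ≤ Real.exp (-(1 / 2) * ((δ : ℝ) * Real.log δ - (δ : ℝ) + 1)) := by
  have hℓp : (ℓ : ℝ) * p ≤ 1 := by
    rw [hℓ, ← le_div_iff₀ hp0]
    exact Nat.floor_le (by positivity)
  have hA : 0 ≤ (δ : ℝ) * log δ - δ + 1 := by
    have := InformationTheory.klFun_nonneg (Nat.cast_nonneg δ)
    rw [InformationTheory.klFun] at this
    linarith
  calc ∑ i ∈ Icc δ ℓ, (ℓ.choose i : ℝ) * p ^ i * (1 - p) ^ (ℓ - i)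
      ≤ ℓ.choose δ * p ^ δ := sum_Icc_choose_mul_pow_mul_pow_le hp0.le (by linarith) ℓ δ
    _ ≤ (ℓ : ℝ) ^ δ / δ.factorial * p ^ δ := by gcongr; exact Nat.choose_le_pow_div δ ℓ
    _ = (ℓ * p) ^ δ / δ.factorial := by ring
    _ ≤ 1 / δ.factorial := by gcongr; exact pow_le_one₀ (by positivity) hℓp
    _ ≤ exp (-(δ * log δ - δ + 1)) := by
        rw [exp_neg, ← one_div]
        exact one_div_le_one_div_of_le (exp_pos _) (exp_mul_log_sub_add_one_le_factorial hδ)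
    _ ≤ exp (-(1 / 2) * (δ * log δ - δ + 1)) := exp_le_exp.2 (by linarith)
end

section
/- Let n ≥ 2 be an integer, let k > 1 and α ∈ (1/2, 1] be real constants with p = k/n^α < 1/2, set ℓ = ⌊1/p⌋, and partition the index set {1,…,n} into M = ⌈n/ℓ⌉ consecutive blocks, the first M−1 of size ℓ and the last of size n − (M−1)ℓ ≤ ℓ. Suppose each of the n indices is deleted independently with probability p, and for m = 1,…,M let Y_m denote the number of deleted indices in block m. Then for every integer δ ≥ 1, the probability that some block suffers at least δ deletions satisfies P(∃ m : Y_m ≥ δ) < (2k+1) n^{1−α} exp( −(1/2)(δ ln δ − δ + 1) ). -/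
/-!
Deleting at least `δ` indices of a block of size at most `ℓ ≤ 1/p` forces some `δ`-subset of the
block to be deleted entirely, so `P(Y_m ≥ δ) ≤ C(ℓ, δ) p^δ ≤ (ℓ p)^δ / δ! ≤ 1 / δ!`.
The quantity `δ ln δ - δ + 1` is `klFun δ`; it is nonnegative and `exp (klFun δ) ≤ δ!`
(from `(1 + 1/m)^m ≤ e`), so `1 / δ! ≤ exp (-(1/2) klFun δ)`. A union bound over the
`M < n/ℓ + 1 < 2 n p + 1 ≤ (2k + 1) n^(1-α)` blocks (using `ℓ > 1/p - 1 ≥ 1/(2p)`) concludes.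
-/

open MeasureTheory

/-- The number of deleted indices in block m (1-indexed blocks of size l, the last
block possibly shorter): the number of indices i (0-indexed) with
(m-1) l <= i < m l that are deleted in the outcome omega. -/
def blockDeletions (n ℓ m : ℕ) (ω : Fin n → Bool) : ℕ :=
  (Finset.univ.filter
    (fun i : Fin n => (m - 1) * ℓ ≤ (i : ℕ) ∧ (i : ℕ) < m * ℓ ∧ ω i = true)).card

open Real Finset InformationTheory
open scoped ENNReal Nat

lemma pow_self_le_exp_sub_one_mul_factorial {d : ℕ} (hd : 1 ≤ d) :
    (d : ℝ) ^ d ≤ exp (d - 1) * d ! := by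
  induction d, hd using Nat.le_induction with
  | base => simp
  | succ m hm ih =>
    have hm0 : (m : ℝ) ≠ 0 := by positivity
    calc ((m + 1 : ℕ) : ℝ) ^ (m + 1) = (m + 1) * ((m : ℝ) ^ m * (1 + (m : ℝ)⁻¹) ^ m) := by
          rw [← mul_pow, mul_add, mul_inv_cancel₀ hm0]; push_cast; ring
      _ ≤ (m + 1) * (exp (m - 1) * m ! * exp 1) := by
          gcongr; exact Real.one_add_inv_pow_le_exp
      _ = exp ((m + 1 : ℕ) - 1) * (m + 1)! := by
          rw [Nat.factorial_succ]; push_cast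
          rw [add_sub_cancel_right, ← sub_add_cancel (m : ℝ) 1, exp_add]; ring_nf

lemma exp_klFun_le_factorial {d : ℕ} (hd : 1 ≤ d) : exp (klFun d) ≤ d ! := by
  have hd0 : (0 : ℝ) < d := by exact_mod_cast hd
  calc exp (klFun d) = (d : ℝ) ^ d * exp (1 - d) := by
        rw [klFun, ← exp_log hd0, ← exp_nat_mul, ← exp_add, exp_log hd0]; ring_nf
    _ ≤ exp (d - 1) * d ! * exp (1 - d) := by
        gcongr; exact pow_self_le_exp_sub_one_mul_factorial hd
    _ = d ! := by rw [mul_right_comm, ← exp_add]; simp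

lemma inv_factorial_le_exp_neg_half_klFun {d : ℕ} (hd : 1 ≤ d) :
    (d ! : ℝ)⁻¹ ≤ exp (-(1 / 2) * klFun d) := by
  have hkl : 0 ≤ klFun d := klFun_nonneg d.cast_nonneg
  calc (d ! : ℝ)⁻¹ ≤ (exp (klFun d))⁻¹ := by
        gcongr; exact exp_klFun_le_factorial hd
    _ = exp (-klFun d) := (exp_neg _).symm
    _ ≤ exp (-(1 / 2) * klFun d) := by gcongr; linarith

lemma choose_mul_pow_le_inv_factorial {ℓ : ℕ} {p : ℝ} (hp : 0 ≤ p) (hℓp : ℓ * p ≤ 1) (d : ℕ) :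
    (ℓ.choose d : ℝ) * p ^ d ≤ (d ! : ℝ)⁻¹ := by
  calc (ℓ.choose d : ℝ) * p ^ d ≤ (ℓ : ℝ) ^ d / d ! * p ^ d := by
        gcongr; exact Nat.choose_le_pow_div d ℓ
    _ = (ℓ * p) ^ d * (d ! : ℝ)⁻¹ := by ring
    _ ≤ (d ! : ℝ)⁻¹ := by
        apply mul_le_of_le_one_left (by positivity); exact pow_le_one₀ (by positivity) hℓp

lemma natFloor_inv_mul_le_one {p : ℝ} (hp : 0 < p) : (⌊1 / p⌋₊ : ℝ) * p ≤ 1 :=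
  calc (⌊1 / p⌋₊ : ℝ) * p ≤ 1 / p * p := by gcongr; exact Nat.floor_le (by positivity)
    _ = 1 := by field_simp

lemma inv_two_mul_lt_natFloor_inv {p : ℝ} (hp : 0 < p) (hp2 : p < 1 / 2) :
    1 / (2 * p) < ⌊1 / p⌋₊ := by
  have : 1 < 1 / (2 * p) := by rw [lt_div_iff₀ (by positivity)]; linarith
  have : 1 / p - 1 < ⌊1 / p⌋₊ := Nat.sub_one_lt_floor _
  have : 1 / p = 2 * (1 / (2 * p)) := by field_simp
  linarith

lemma natCeil_div_natFloor_inv_lt {p x : ℝ} (hp : 0 < p) (hp2 : p < 1 / 2) (hx : 0 < x) :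
    (⌈x / ⌊1 / p⌋₊⌉₊ : ℝ) < 2 * x * p + 1 := by
  have hℓ := inv_two_mul_lt_natFloor_inv hp hp2
  calc (⌈x / ⌊1 / p⌋₊⌉₊ : ℝ) < x / ⌊1 / p⌋₊ + 1 := Nat.ceil_lt_add_one (by positivity)
    _ < x / (1 / (2 * p)) + 1 := by gcongr
    _ = 2 * x * p + 1 := by field_simp

section Bernoulli

variable {ι : Type*} [Fintype ι] (q : NNReal) (hq : q ≤ 1)

lemma pi_bernoulli_forall_mem_true (S : Finset ι) :
    Measure.pi (fun _ : ι => (PMF.bernoulli q hq).toMeasure) {ω | ∀ i ∈ S, ω i = true}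
      = (q : ℝ≥0∞) ^ #S := by
  classical
  have hset : {ω : ι → Bool | ∀ i ∈ S, ω i = true}
      = Set.univ.pi (fun i => if i ∈ (S : Set ι) then {true} else Set.univ) := by
    rw [Set.pi_univ_ite]; ext ω; simp
  rw [hset, Measure.pi_pi]
  simp only [Finset.mem_coe, apply_ite, measure_univ, prod_ite_mem, univ_inter, prod_const,
    PMF.toMeasure_apply_singleton _ _ (measurableSet_singleton true), PMF.bernoulli_apply,
    cond_true]

lemma pi_bernoulli_le_card_filter_true_le (B : Finset ι) (d : ℕ) :
    Measure.pi (fun _ : ι => (PMF.bernoulli q hq).toMeasure) {ω | d ≤ #{i ∈ B | ω i = true}}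
      ≤ (#B).choose d * (q : ℝ≥0∞) ^ d := by
  set μ := Measure.pi (fun _ : ι => (PMF.bernoulli q hq).toMeasure)
  have hsub : {ω : ι → Bool | d ≤ #{i ∈ B | ω i = true}}
      ⊆ ⋃ S ∈ B.powersetCard d, {ω | ∀ i ∈ S, ω i = true} := by
    intro ω hω
    obtain ⟨S, hS, hScard⟩ := Finset.exists_subset_card_eq hω
    simp only [Set.mem_iUnion, Finset.mem_powersetCard]
    exact ⟨S, ⟨hS.trans (filter_subset _ _), hScard⟩, fun i hi => (mem_filter.mp (hS hi)).2⟩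
  calc μ {ω | d ≤ #{i ∈ B | ω i = true}}
      ≤ ∑ S ∈ B.powersetCard d, μ {ω | ∀ i ∈ S, ω i = true} :=
        (measure_mono hsub).trans (measure_biUnion_finset_le _ _)
    _ = (#B).choose d * (q : ℝ≥0∞) ^ d := by
        rw [sum_congr rfl fun S hS => by
          rw [pi_bernoulli_forall_mem_true, (mem_powersetCard.mp hS).2], sum_const,
          card_powersetCard, nsmul_eq_mul]

end Bernoulli

def blockIndices (n ℓ m : ℕ) : Finset (Fin n) :=
  {i | (m - 1) * ℓ ≤ (i : ℕ) ∧ (i : ℕ) < m * ℓ}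

lemma blockDeletions_eq_card_filter (n ℓ m : ℕ) (ω : Fin n → Bool) :
    blockDeletions n ℓ m ω = #{i ∈ blockIndices n ℓ m | ω i = true} := by
  simp only [blockDeletions, blockIndices, filter_filter, and_assoc]

lemma card_blockIndices_le (n ℓ m : ℕ) : #(blockIndices n ℓ m) ≤ ℓ := by
  calc #(blockIndices n ℓ m) ≤ #(Ico ((m - 1) * ℓ) (m * ℓ)) :=
        card_le_card_of_injOn Fin.val (fun i hi => by simpa [blockIndices] using hi)
          Fin.val_injective.injOn
    _ ≤ ℓ := by
        rw [Nat.card_Ico, ← Nat.sub_mul]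
        exact (Nat.mul_le_mul_right ℓ (by omega : m - (m - 1) ≤ 1)).trans_eq (one_mul ℓ)

lemma pi_bernoulli_exists_block_ge_le (n ℓ M d : ℕ) (q : NNReal) (hq : q ≤ 1) :
    Measure.pi (fun _ : Fin n => (PMF.bernoulli q hq).toMeasure)
        {ω | ∃ m ∈ Icc 1 M, d ≤ blockDeletions n ℓ m ω}
      ≤ M * (ℓ.choose d * (q : ℝ≥0∞) ^ d) := by
  set μ := Measure.pi (fun _ : Fin n => (PMF.bernoulli q hq).toMeasure)
  have hunion : {ω | ∃ m ∈ Icc 1 M, d ≤ blockDeletions n ℓ m ω}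
      = ⋃ m ∈ Icc 1 M, {ω | d ≤ blockDeletions n ℓ m ω} := by
    ext ω; simp
  calc μ {ω | ∃ m ∈ Icc 1 M, d ≤ blockDeletions n ℓ m ω}
      ≤ ∑ m ∈ Icc 1 M, μ {ω | d ≤ blockDeletions n ℓ m ω} :=
        hunion ▸ measure_biUnion_finset_le _ _
    _ ≤ ∑ _m ∈ Icc 1 M, ℓ.choose d * (q : ℝ≥0∞) ^ d := by
        gcongr with m
        simp only [blockDeletions_eq_card_filter]
        refine (pi_bernoulli_le_card_filter_true_le q hq _ d).trans ?_
        gcongr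
        exact card_blockIndices_le n ℓ m
    _ = M * (ℓ.choose d * (q : ℝ≥0∞) ^ d) := by simp

theorem prob_some_block_many_deletions_general
    (n : ℕ) (hn : 2 ≤ n) (k α : ℝ) (hk : 1 < k) (hα2 : α ≤ 1)
    (p : ℝ) (hp : p = k / (n : ℝ) ^ α) (hp2 : p < 1 / 2)
    (ℓ : ℕ) (hℓ : ℓ = ⌊1 / p⌋₊)
    (M : ℕ) (hM : M = ⌈(n : ℝ) / (ℓ : ℝ)⌉₊)
    (hple : ENNReal.ofReal p ≤ 1)
    (μ : Measure (Fin n → Bool))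
    (hμ : μ = Measure.pi (fun _ : Fin n => (PMF.bernoulli (Real.toNNReal p) (ENNReal.coe_le_one_iff.mp hple)).toMeasure))
    (δ : ℕ) (hδ : 1 ≤ δ) :
    μ {ω | ∃ m ∈ Finset.Icc 1 M, δ ≤ blockDeletions n ℓ m ω}
      < ENNReal.ofReal ((2 * k + 1) * (n : ℝ) ^ (1 - α) *
          Real.exp (-(1 / 2) * ((δ : ℝ) * Real.log δ - (δ : ℝ) + 1))) := by
  have hn1 : (1 : ℝ) ≤ n := by exact_mod_cast (by omega : 1 ≤ n)
  have hp0 : 0 < p := by rw [hp]; positivity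
  have hnp : (n : ℝ) * p = k * (n : ℝ) ^ (1 - α) := by
    rw [hp, Real.rpow_sub (by linarith), Real.rpow_one]; field_simp
  have hM_lt : (M : ℝ) < (2 * k + 1) * (n : ℝ) ^ (1 - α) := by
    have := Real.one_le_rpow hn1 (by linarith : 0 ≤ 1 - α)
    have := natCeil_div_natFloor_inv_lt hp0 hp2 (by linarith : (0 : ℝ) < n)
    rw [hM, hℓ]; linarith
  have hblock : (ℓ.choose δ : ℝ) * p ^ δ ≤ exp (-(1 / 2) * klFun δ) :=
    (choose_mul_pow_le_inv_factorial hp0.le (hℓ ▸ natFloor_inv_mul_le_one hp0) δ).trans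
      (inv_factorial_le_exp_neg_half_klFun hδ)
  rw [hμ]
  refine (pi_bernoulli_exists_block_ge_le n ℓ M δ _ _).trans_lt ?_
  have hklFun : klFun δ = δ * log δ - δ + 1 := by rw [klFun]; ring
  have hcast : (M : ℝ≥0∞) * (ℓ.choose δ * (p.toNNReal : ℝ≥0∞) ^ δ)
      = ENNReal.ofReal (M * (ℓ.choose δ * p ^ δ)) := by
    rw [ENNReal.ofReal_mul (by positivity), ENNReal.ofReal_mul (by positivity),
      ENNReal.ofReal_pow hp0.le, ENNReal.ofReal_natCast, ENNReal.ofReal_natCast]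
    rfl
  rw [hcast, ENNReal.ofReal_lt_ofReal_iff (by positivity), ← hklFun]
  calc (M : ℝ) * (ℓ.choose δ * p ^ δ) ≤ M * exp (-(1 / 2) * klFun δ) := by gcongr
    _ < (2 * k + 1) * (n : ℝ) ^ (1 - α) * exp (-(1 / 2) * klFun δ) := by gcongr

/-- Delete each of n indices independently with probability
p = k/n^alpha < 1/2 (k > 1, alpha in (1/2,1], n >= 2), and partition the indices
into M = ceil(n/l) consecutive blocks of size l = floor(1/p) (last block possibly
shorter). Then the probability that some block suffers at least delta deletions is
less than (2k+1) n^(1-alpha) exp(-(1/2)(delta ln delta - delta + 1)). -/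
theorem prob_some_block_many_deletions
    (n : ℕ) (hn : 2 ≤ n) (k α : ℝ) (hk : 1 < k) (hα1 : 1 / 2 < α) (hα2 : α ≤ 1)
    (p : ℝ) (hp : p = k / (n : ℝ) ^ α) (hp2 : p < 1 / 2)
    (ℓ : ℕ) (hℓ : ℓ = ⌊1 / p⌋₊)
    (M : ℕ) (hM : M = ⌈(n : ℝ) / (ℓ : ℝ)⌉₊)
    (hple : ENNReal.ofReal p ≤ 1)
    (μ : Measure (Fin n → Bool))
    (hμ : μ = Measure.pi (fun _ : Fin n => (PMF.bernoulli (Real.toNNReal p) (ENNReal.coe_le_one_iff.mp hple)).toMeasure))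
    (δ : ℕ) (hδ : 1 ≤ δ) :
    μ {ω | ∃ m ∈ Finset.Icc 1 M, δ ≤ blockDeletions n ℓ m ω}
      < ENNReal.ofReal ((2 * k + 1) * (n : ℝ) ^ (1 - α) *
          Real.exp (-(1 / 2) * ((δ : ℝ) * Real.log δ - (δ : ℝ) + 1))) :=
  prob_some_block_many_deletions_general n hn k α hk hα2 p hp hp2 ℓ hℓ M hM hple μ hμ δ hδ
end
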